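/- Let f_j ∈ L²(ℝ^d) be a sequence such that ‖f_j‖ ≤ C uniformly in j, and f_j(x) = 0 for all |x| ≥ ρ > 0 and all j. Suppose f_j converges weakly in L²(ℝ^d) to f, and that for some constants A > 0, κ > 0, R₀ > 0 and C > 0, for all R ≥ R₀ one has liminf_{j→∞} ‖f̂_j · χ_R‖ ≥ A − C R^{−κ}, where χ_R is the indicator of the ball {|ξ| < R} and f̂_j is the Fourier transform of f_j. Then ‖f‖ ≥ A. -/

import Mathlib

/-!
Because every `f j` vanishes outside the ball `B = B(0, ρ)`, its Fourier transform at `ξ` is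
`(2π)^{-d/2}` times its pairing with the truncated plane wave `1_B(x) e^{i x·ξ}`, whose norm does
not depend on `ξ`. Weak convergence therefore makes `F (f j)` converge pointwise a.e. to `F flim`
(the weak limit also vanishes outside `B`), with a uniform bound, so by dominated convergence
`‖F (f j) χ_R‖ → ‖F flim χ_R‖ ≤ ‖flim‖` for every `R`. Letting `R → ∞` in
`A - C' R^{-κ} ≤ ‖flim‖` gives the claim.
-/

open MeasureTheory Filter Complex Asymptotics ComplexConjugate
open scoped Topology

noncomputable section

/-- `ℝᵈ` realized as the Euclidean space. -/
abbrev Ed (d : ℕ) := EuclideanSpace ℝ (Fin d)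

/-- The complex Hilbert space `L²(ℝᵈ)`. -/
abbrev L2 (d : ℕ) := MeasureTheory.Lp ℂ 2 (volume : MeasureTheory.Measure (Ed d))

/-- `F` is the unitary Fourier transform on `L²(ℝᵈ)` in the convention
`(𝓕 u)(ξ) = (2π)^{-d/2} ∫ e^{-i ξ·x} u(x) dx`: it is a surjective linear isometry of
`L²(ℝᵈ)`, agreeing on integrable functions with the above integral. -/
def IsPaperFourier {d : ℕ} (F : L2 d ≃ₗᵢ[ℂ] L2 d) : Prop :=
  ∀ f : L2 d, MeasureTheory.Integrable (⇑f) volume →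
    (⇑(F f) : Ed d → ℂ) =ᵐ[volume]
      fun ξ : Ed d => (((2 * Real.pi) ^ (-(d : ℝ) / 2) : ℝ) : ℂ) *
        ∫ x : Ed d, Complex.exp (-Complex.I * ((inner ℝ x ξ : ℝ) : ℂ)) * (⇑f) x

/-- The scalar product `(u, v) = ∫ u(x) conj (v(x)) dx` on `L²(ℝᵈ)` (the convention of the
paper: linear in the first argument). -/
def sesq {d : ℕ} (u v : L2 d) : ℂ := ∫ x : Ed d, (⇑u) x * conj ((⇑v) x)

/-- The `n`-th eigenvalue (in descending order, counting multiplicity) of a compact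
self-adjoint operator `B` on `L²(ℝᵈ)`, via its max-min characterization:
`λ⁽ⁿ⁾ = sup over n-dimensional subspaces M of inf_{u ∈ M, ‖u‖ = 1} ⟨B u, u⟩`. -/
def lamEig {d : ℕ} (B : L2 d → L2 d) (n : ℕ) : ℝ :=
  ⨆ M : {M : Submodule ℂ (L2 d) // Module.finrank ℂ M = n},
    ⨅ u : {u : L2 d // u ∈ M.1 ∧ ‖u‖ = 1}, (sesq (B u.1) u.1).re

/-- The form domain `D[T] = {u ∈ L² : ∫ |ξ|^γ |û|² < ∞, ∫ |x|^β |u|² < ∞}`. -/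
def DTset {d : ℕ} (F : L2 d ≃ₗᵢ[ℂ] L2 d) (γ β : ℝ) : Set (L2 d) :=
  {u : L2 d |
    MeasureTheory.Integrable (fun ξ : Ed d => ‖ξ‖ ^ γ * ‖(⇑(F u)) ξ‖ ^ 2) volume ∧
    MeasureTheory.Integrable (fun x : Ed d => ‖x‖ ^ β * ‖(⇑u) x‖ ^ 2) volume}

/-- The `n`-th min-max value of a quadratic form `Tf` with form domain `DT`:
`μ⁽ⁿ⁾ = inf over n-dimensional subspaces M ⊆ DT of sup_{u ∈ M, ‖u‖ = 1} Tf u`. -/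
def muVal {d : ℕ} (DT : Set (L2 d)) (Tf : L2 d → ℝ) (n : ℕ) : ℝ :=
  ⨅ M : {M : Submodule ℂ (L2 d) // Module.finrank ℂ M = n ∧ (M : Set (L2 d)) ⊆ DT},
    ⨆ u : {u : L2 d // u ∈ M.1 ∧ ‖u‖ = 1}, Tf u.1

open scoped ENNReal

theorem le_of_forall_sub_mul_rpow_neg_le {A C κ R₀ a : ℝ} (hκ : 0 < κ)
    (h : ∀ R, R₀ ≤ R → A - C * R ^ (-κ) ≤ a) : A ≤ a := by
  have hlim : Tendsto (fun R : ℝ => A - C * R ^ (-κ)) atTop (𝓝 (A - C * 0)) :=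
    tendsto_const_nhds.sub ((tendsto_rpow_neg_atTop hκ).const_mul C)
  simpa using le_of_tendsto hlim (eventually_atTop.2 ⟨R₀, h⟩)

namespace MeasureTheory

variable {α E : Type*} [MeasurableSpace α] {μ : Measure α} [NormedAddCommGroup E]

theorem L2.integrable_norm_sq (u : Lp E 2 μ) : Integrable (fun x => ‖u x‖ ^ 2) μ :=
  (Lp.memLp u).integrable_norm_pow two_ne_zero

theorem MemLp.integrable_of_ae_notMem_eq_zero {u : α → E} (hu : MemLp u 2 μ) {s : Set α}
    (hμs : μ s ≠ ∞) (h : ∀ᵐ x ∂μ, x ∉ s → u x = 0) : Integrable u μ := by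
  have : IsFiniteMeasure (μ.restrict s) := isFiniteMeasure_restrict.2 hμs
  exact IntegrableOn.integrable_of_ae_notMem_eq_zero ((hu.restrict s).integrable one_le_two) h

variable [InnerProductSpace ℝ E]

theorem L2.norm_sq_eq_integral_norm_sq (u : Lp E 2 μ) : ‖u‖ ^ 2 = ∫ x, ‖u x‖ ^ 2 ∂μ := by
  rw [← @inner_self_eq_norm_sq ℝ, L2.inner_def, ← integral_re (L2.integrable_inner u u)]
  simp only [inner_self_eq_norm_sq]

theorem L2.setIntegral_norm_sq_le_norm_sq (u : Lp E 2 μ) (t : Set α) :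
    ∫ x in t, ‖u x‖ ^ 2 ∂μ ≤ ‖u‖ ^ 2 := by
  rw [L2.norm_sq_eq_integral_norm_sq]
  exact setIntegral_le_integral (L2.integrable_norm_sq u) (.of_forall fun _ => by positivity)

end MeasureTheory

section FourierOfCompactlySupported

variable {d : ℕ}

theorem sesq_eq_inner (u v : L2 d) : sesq u v = inner ℂ v u := by
  rw [L2.inner_def, sesq]
  simp [RCLike.inner_apply]

theorem norm_sesq_le (u v : L2 d) : ‖sesq u v‖ ≤ ‖u‖ * ‖v‖ := by
  rw [sesq_eq_inner, mul_comm]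
  exact norm_inner_le_norm v u

theorem ae_notMem_eq_zero_of_tendsto_sesq {s : Set (Ed d)} (hs : MeasurableSet s)
    {f : ℕ → L2 d} {flim : L2 d} (hf : ∀ j, ∀ᵐ x, x ∉ s → f j x = 0)
    (hweak : ∀ g : L2 d, Tendsto (fun j => sesq (f j) g) atTop (𝓝 (sesq flim g))) :
    ∀ᵐ x, x ∉ s → flim x = 0 := by
  set g : L2 d := ((Lp.memLp flim).indicator hs.compl).toLp _
  have hg : g =ᵐ[volume] sᶜ.indicator flim := ((Lp.memLp flim).indicator hs.compl).coeFn_toLp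
  have h_orth : ∀ j, sesq (f j) g = 0 := fun j => by
    rw [sesq_eq_inner, L2.inner_def]
    refine integral_eq_zero_of_ae ?_
    filter_upwards [hf j, hg] with x hfx hgx
    by_cases hx : x ∈ s
    · simp [hgx, hx]
    · simp [hfx hx]
  -- testing against `g = 1_{sᶜ} flim` gives `‖g‖² = ⟪g, flim⟫ = lim ⟪g, f j⟫ = 0`
  have hg_inner : inner ℂ g flim = inner ℂ g g := by
    rw [L2.inner_def, L2.inner_def]
    refine integral_congr_ae ?_
    filter_upwards [hg] with x hgx
    by_cases hx : x ∈ s <;> simp [hgx, hx]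
  have hg_zero : g = 0 := by
    rw [← inner_self_eq_zero (𝕜 := ℂ), ← hg_inner, ← sesq_eq_inner]
    exact tendsto_nhds_unique (hweak g) (by simp [h_orth])
  filter_upwards [hg, hg_zero ▸ Lp.coeFn_zero ℂ 2 volume] with x hgx hg0 hx
  simpa [hx, hg0] using hgx.symm

section PlaneWave

variable {s : Set (Ed d)}

theorem norm_indicator_exp_mul_I (ξ x : Ed d) :
    ‖s.indicator (fun x => Complex.exp (Complex.I * (inner ℝ x ξ : ℝ))) x‖
      = ‖s.indicator (fun _ => (1 : ℂ)) x‖ := by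
  by_cases hx : x ∈ s
  · simp [hx, mul_comm Complex.I, Complex.norm_exp_ofReal_mul_I]
  · simp [hx]

theorem memLp_indicator_exp_mul_I (hs : MeasurableSet s) (hμs : volume s ≠ ∞) (ξ : Ed d) :
    MemLp (s.indicator fun x => Complex.exp (Complex.I * (inner ℝ x ξ : ℝ))) 2 volume :=
  (memLp_indicator_const 2 hs (1 : ℂ) (Or.inr hμs)).of_le
    ((by fun_prop : Continuous fun x : Ed d => Complex.exp (Complex.I * (inner ℝ x ξ : ℝ)))
      |>.aestronglyMeasurable.indicator hs)
    (.of_forall fun x => (norm_indicator_exp_mul_I ξ x).le)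

def truncatedPlaneWave (hs : MeasurableSet s) (hμs : volume s ≠ ∞) (ξ : Ed d) : L2 d :=
  (memLp_indicator_exp_mul_I hs hμs ξ).toLp _

theorem norm_truncatedPlaneWave_le (hs : MeasurableSet s) (hμs : volume s ≠ ∞) (ξ : Ed d) :
    ‖truncatedPlaneWave hs hμs ξ‖ ≤ ‖indicatorConstLp 2 hs hμs (1 : ℂ)‖ := by
  refine Lp.norm_le_norm_of_ae_le ?_
  filter_upwards [(memLp_indicator_exp_mul_I hs hμs ξ).coeFn_toLp,
    indicatorConstLp_coeFn (p := 2) (hs := hs) (hμs := hμs) (c := (1 : ℂ))] with x hx h1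
  rw [truncatedPlaneWave, hx, h1, norm_indicator_exp_mul_I]

theorem integral_exp_mul_eq_sesq_truncatedPlaneWave (hs : MeasurableSet s)
    (hμs : volume s ≠ ∞) {u : L2 d} (hu : ∀ᵐ x, x ∉ s → u x = 0) (ξ : Ed d) :
    ∫ x, Complex.exp (-Complex.I * (inner ℝ x ξ : ℝ)) * u x
      = sesq u (truncatedPlaneWave hs hμs ξ) := by
  refine integral_congr_ae ?_
  filter_upwards [hu, (memLp_indicator_exp_mul_I hs hμs ξ).coeFn_toLp] with x hux hx
  rw [truncatedPlaneWave, hx]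
  by_cases hxs : x ∈ s
  · simp [hxs, ← Complex.exp_conj, mul_comm]
  · simp [hxs, hux hxs]

theorem IsPaperFourier.ae_eq_sesq_truncatedPlaneWave {F : L2 d ≃ₗᵢ[ℂ] L2 d}
    (hF : IsPaperFourier F) (hs : MeasurableSet s) (hμs : volume s ≠ ∞) {u : L2 d}
    (hu : ∀ᵐ x, x ∉ s → u x = 0) :
    F u =ᵐ[volume] fun ξ => (((2 * Real.pi) ^ (-(d : ℝ) / 2) : ℝ) : ℂ) *
      sesq u (truncatedPlaneWave hs hμs ξ) := by
  filter_upwards [hF u ((Lp.memLp u).integrable_of_ae_notMem_eq_zero hμs hu)] with ξ hξ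
  rw [hξ, integral_exp_mul_eq_sesq_truncatedPlaneWave hs hμs hu]

end PlaneWave

theorem tendsto_setIntegral_norm_sq_of_tendsto_sesq {F : L2 d ≃ₗᵢ[ℂ] L2 d}
    (hF : IsPaperFourier F) {s t : Set (Ed d)} (hs : MeasurableSet s) (hμs : volume s ≠ ∞)
    (hμt : volume t ≠ ∞) {f : ℕ → L2 d} {flim : L2 d} {C : ℝ} (hbdd : ∀ j, ‖f j‖ ≤ C)
    (hf : ∀ j, ∀ᵐ x, x ∉ s → f j x = 0)
    (hweak : ∀ g : L2 d, Tendsto (fun j => sesq (f j) g) atTop (𝓝 (sesq flim g))) :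
    Tendsto (fun j => ∫ ξ in t, ‖F (f j) ξ‖ ^ 2) atTop (𝓝 (∫ ξ in t, ‖F flim ξ‖ ^ 2)) := by
  set c : ℂ := (((2 * Real.pi) ^ (-(d : ℝ) / 2) : ℝ) : ℂ)
  set e := truncatedPlaneWave hs hμs
  have hrepr : ∀ᵐ ξ, (∀ j, F (f j) ξ = c * sesq (f j) (e ξ)) ∧ F flim ξ = c * sesq flim (e ξ) :=
    (ae_all_iff.2 fun j => hF.ae_eq_sesq_truncatedPlaneWave hs hμs (hf j)).and
      (hF.ae_eq_sesq_truncatedPlaneWave hs hμs (ae_notMem_eq_zero_of_tendsto_sesq hs hf hweak))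
  set M := ‖c‖ * (C * ‖indicatorConstLp 2 hs hμs (1 : ℂ)‖)
  have hbound : ∀ j ξ, ‖c * sesq (f j) (e ξ)‖ ≤ M := by
    intro j ξ
    rw [norm_mul]
    refine mul_le_mul_of_nonneg_left ((norm_sesq_le _ _).trans ?_) (norm_nonneg c)
    exact mul_le_mul (hbdd j) (norm_truncatedPlaneWave_le hs hμs ξ) (norm_nonneg _)
      ((norm_nonneg _).trans (hbdd j))
  have : IsFiniteMeasure (volume.restrict t) := isFiniteMeasure_restrict.2 hμt
  refine tendsto_integral_of_dominated_convergence (fun _ => M ^ 2)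
    (fun j => (Lp.aestronglyMeasurable (F (f j))).norm.pow 2 |>.restrict) (integrable_const _)
    (fun j => ae_restrict_of_ae (hrepr.mono fun ξ h => ?_))
    (ae_restrict_of_ae (hrepr.mono fun ξ h => ?_))
  · rw [h.1 j, norm_pow, norm_norm]
    exact pow_le_pow_left₀ (norm_nonneg _) (hbound j ξ) 2
  · simp only [h.1, h.2]
    exact ((hweak (e ξ)).const_mul c).norm.pow 2

end FourierOfCompactlySupported

theorem stmt_15_general (d : ℕ)
    (F : L2 d ≃ₗᵢ[ℂ] L2 d) (hF : IsPaperFourier F)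
    (f : ℕ → L2 d) (flim : L2 d)
    (C ρ : ℝ)
    (hbdd : ∀ j : ℕ, ‖f j‖ ≤ C)
    (hsupp : ∀ j : ℕ, ∀ᵐ x : Ed d ∂(volume : Measure (Ed d)), ρ ≤ ‖x‖ → (⇑(f j)) x = 0)
    (hweak : ∀ g : L2 d,
      Tendsto (fun j : ℕ => sesq (f j) g) atTop (𝓝 (sesq flim g)))
    (A κ R₀ C' : ℝ) (hκ : 0 < κ)
    (hlim : ∀ R : ℝ, R₀ ≤ R →
      A - C' * R ^ (-κ) ≤ Filter.liminf
        (fun j : ℕ =>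
          Real.sqrt (∫ ξ in Metric.ball (0 : Ed d) R, ‖(⇑(F (f j))) ξ‖ ^ 2)) atTop) :
    A ≤ ‖flim‖ := by
  have hf : ∀ j, ∀ᵐ x, x ∉ Metric.ball (0 : Ed d) ρ → f j x = 0 := fun j =>
    (hsupp j).mono fun x hx hxρ => hx (by simpa using hxρ)
  refine le_of_forall_sub_mul_rpow_neg_le (C := C') (R₀ := R₀) hκ fun R hR => ?_
  have hconv := tendsto_setIntegral_norm_sq_of_tendsto_sesq hF measurableSet_ball
    measure_ball_lt_top.ne (measure_ball_lt_top (x := 0) (r := R)).ne hbdd hf hweak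
  calc A - C' * R ^ (-κ)
      ≤ liminf (fun j => √(∫ ξ in Metric.ball 0 R, ‖F (f j) ξ‖ ^ 2)) atTop := hlim R hR
    _ = √(∫ ξ in Metric.ball 0 R, ‖F flim ξ‖ ^ 2) :=
      ((Real.continuous_sqrt.tendsto _).comp hconv).liminf_eq
    _ ≤ √(‖F flim‖ ^ 2) := Real.sqrt_le_sqrt (L2.setIntegral_norm_sq_le_norm_sq _ _)
    _ = ‖flim‖ := by rw [Real.sqrt_sq (norm_nonneg _), F.norm_map]

/-- (Proposition on weak limits.) If `f_j ∈ L²(ℝᵈ)` with `‖f_j‖ ≤ C`,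
`f_j = 0` a.e. outside the ball of radius `ρ > 0`, `f_j ⇀ f` weakly, and for all `R ≥ R₀`
`liminf_j ‖f̂_j χ_R‖ ≥ A - C' R^{-κ}` with `A > 0`, `κ > 0`, then `‖f‖ ≥ A`. -/
theorem stmt_15 (d : ℕ) (hd : 1 ≤ d)
    (F : L2 d ≃ₗᵢ[ℂ] L2 d) (hF : IsPaperFourier F)
    (f : ℕ → L2 d) (flim : L2 d)
    (C ρ : ℝ) (hρ : 0 < ρ)
    (hbdd : ∀ j : ℕ, ‖f j‖ ≤ C)
    (hsupp : ∀ j : ℕ, ∀ᵐ x : Ed d ∂(volume : Measure (Ed d)), ρ ≤ ‖x‖ → (⇑(f j)) x = 0)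
    (hweak : ∀ g : L2 d,
      Tendsto (fun j : ℕ => sesq (f j) g) atTop (𝓝 (sesq flim g)))
    (A κ R₀ C' : ℝ) (hA : 0 < A) (hκ : 0 < κ) (hR₀ : 0 < R₀)
    (hlim : ∀ R : ℝ, R₀ ≤ R →
      A - C' * R ^ (-κ) ≤ Filter.liminf
        (fun j : ℕ =>
          Real.sqrt (∫ ξ in Metric.ball (0 : Ed d) R, ‖(⇑(F (f j))) ξ‖ ^ 2)) atTop) :
    A ≤ ‖flim‖ :=
  stmt_15_general d F hF f flim C ρ hbdd hsupp hweak A κ R₀ C' hκ hlim
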